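/- Let T be the transformation mapping terms over a signature Σ to terms over Σ' = Σ_0' ∪ Σ_m', where Σ_0' = Σ (all symbols of Σ as constants), Σ_m' = {f} with m = 1 + max arity in Σ, defined by T(c) = c, T(x) = x, and T(g(t_1,…,t_k)) = f(T(t_1),…,T(t_k),g,…,g). Then for all terms s, t over Σ: s →_R t if and only if T(s) →_{T(R)} T(t), where T(R) = { T(l) → T(r) : l → r ∈ R }. -/

import Mathlib

/-- First-order terms over function symbols `F` and variables `V`. -/
inductive Tm (F V : Type) : Type
  | var : V → Tm F V
  | app : F → List (Tm F V) → Tm F V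

namespace Tm

variable {F V : Type}

/-- Height of a term: 0 for variables and constants. -/
def height : Tm F V → ℕ
  | var _ => 0
  | app _ ts => ts.attach.foldr (fun t m => max (height t.1 + 1) m) 0
decreasing_by all_goals (simp_wf; have := List.sizeOf_lt_of_mem t.2; omega)

/-- Size (number of positions) of a term. -/
def size : Tm F V → ℕ
  | var _ => 1
  | app _ ts => 1 + (ts.attach.map (fun t => size t.1)).sum
decreasing_by all_goals (simp_wf; have := List.sizeOf_lt_of_mem t.2; omega)

/-- Apply a substitution. -/
def subst (σ : V → Tm F V) : Tm F V → Tm F V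
  | var x => σ x
  | app f ts => app f (ts.attach.map (fun t => subst σ t.1))
decreasing_by all_goals (simp_wf; have := List.sizeOf_lt_of_mem t.2; omega)

/-- List of variable occurrences. -/
def varList : Tm F V → List V
  | var x => [x]
  | app _ ts => (ts.attach.map (fun t => varList t.1)).flatten
decreasing_by all_goals (simp_wf; have := List.sizeOf_lt_of_mem t.2; omega)

/-- List of function-symbol occurrences. -/
def symList : Tm F V → List F
  | var _ => []
  | app f ts => f :: (ts.attach.map (fun t => symList t.1)).flatten
decreasing_by all_goals (simp_wf; have := List.sizeOf_lt_of_mem t.2; omega)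

/-- The subterm at a position (positions are lists of argument indices). -/
def subAt : Tm F V → List ℕ → Option (Tm F V)
  | t, [] => some t
  | var _, _ :: _ => none
  | app _ ts, i :: p => match ts[i]? with
      | some u => subAt u p
      | none => none

/-- Replace the subterm at a position. -/
def replAt : Tm F V → List ℕ → Tm F V → Option (Tm F V)
  | _, [], s => some s
  | var _, _ :: _, _ => none
  | app f ts, i :: p, s => match ts[i]? with
      | some u => (replAt u p s).map (fun u' => app f (ts.set i u'))
      | none => none

/-- `p` is a position of `t`. -/
def IsPos (t : Tm F V) (p : List ℕ) : Prop := (t.subAt p).isSome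

/-- A term is a constant if it is a nullary function application. -/
def IsConst (t : Tm F V) : Prop := ∃ f : F, t = app f []

def Ground (t : Tm F V) : Prop := t.varList = []

/-- A term is linear if each variable occurs at most once. -/
def Linear (t : Tm F V) : Prop := t.varList.Nodup

/-- A term is flat if its height is at most 1. -/
def Flat (t : Tm F V) : Prop := t.height ≤ 1

/-- A term is shallow if all variables occur at depth at most 1. -/
def Shallow (t : Tm F V) : Prop :=
  ∀ (p : List ℕ) (x : V), t.subAt p = some (var x) → p.length ≤ 1

end Tm

/-- A rewrite rule. -/
structure Rule (F V : Type) where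
  lhs : Tm F V
  rhs : Tm F V

namespace Rule

variable {F V : Type}

/-- Standard well-formedness: the lhs is not a variable and variables of the
rhs occur in the lhs. -/
def WF (r : Rule F V) : Prop :=
  (∀ x : V, r.lhs ≠ Tm.var x) ∧ ∀ x ∈ r.rhs.varList, x ∈ r.lhs.varList

def RightFlat (r : Rule F V) : Prop := r.rhs.Flat
def RightLinear (r : Rule F V) : Prop := r.rhs.Linear
def RightShallow (r : Rule F V) : Prop := r.rhs.Shallow
def FlatRule (r : Rule F V) : Prop := r.lhs.Flat ∧ r.rhs.Flat
def ShallowRule (r : Rule F V) : Prop := r.lhs.Shallow ∧ r.rhs.Shallow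
def Collapsing (r : Rule F V) : Prop := ∃ x : V, r.rhs = Tm.var x

/-- A permutative rule: linear, flat, height-preserving and variable-preserving. -/
def Permutative (r : Rule F V) : Prop :=
  r.WF ∧ r.lhs.Linear ∧ r.rhs.Linear ∧ r.lhs.Flat ∧ r.rhs.Flat ∧
    r.lhs.height = r.rhs.height ∧ ∀ x : V, x ∈ r.lhs.varList ↔ x ∈ r.rhs.varList

end Rule

/-- A permutative theory: a symmetric set of permutative rules. -/
def PermutativeTheory {F V : Type} (E : Set (Rule F V)) : Prop :=
  (∀ r ∈ E, r.Permutative) ∧ ∀ r ∈ E, (⟨r.rhs, r.lhs⟩ : Rule F V) ∈ E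

section Rewriting

variable {F V : Type}

/-- One rewrite step with rule `l → r` at position `p` using substitution `σ`. -/
def RewWith (l r : Tm F V) (p : List ℕ) (σ : V → Tm F V) (s t : Tm F V) : Prop :=
  s.subAt p = some (l.subst σ) ∧ s.replAt p (r.subst σ) = some t

/-- One rewrite step with TRS `R` at position `p`. -/
def RewAt (R : Set (Rule F V)) (p : List ℕ) (s t : Tm F V) : Prop :=
  ∃ r ∈ R, ∃ σ : V → Tm F V, RewWith r.lhs r.rhs p σ s t

/-- One rewrite step with TRS `R`. -/
def Rew (R : Set (Rule F V)) (s t : Tm F V) : Prop := ∃ p, RewAt R p s t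

/-- Reachability: reflexive-transitive closure of one-step rewriting. -/
def Reach (R : Set (Rule F V)) : Tm F V → Tm F V → Prop :=
  Relation.ReflTransGen (Rew R)

/-- One rewrite step with `R` modulo `E` : `s →E* · →R · →E* t`. -/
def RewMod (R E : Set (Rule F V)) (s t : Tm F V) : Prop :=
  ∃ u v, Reach E s u ∧ Rew R u v ∧ Reach E v t

/-- `R/E` is terminating from `s`. -/
def TerminatingFrom (R E : Set (Rule F V)) (s : Tm F V) : Prop :=
  ¬ ∃ f : ℕ → Tm F V, f 0 = s ∧ ∀ n, RewMod R E (f n) (f (n + 1))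

/-- `R/E` is terminating. -/
def Terminating (R E : Set (Rule F V)) : Prop :=
  ¬ ∃ f : ℕ → Tm F V, ∀ n, RewMod R E (f n) (f (n + 1))

/-- `t` is reachable from some constant. -/
def FromConst (R : Set (Rule F V)) (t : Tm F V) : Prop :=
  ∃ f : F, Reach R (Tm.app f []) t

/-- The measure `‖t‖`: number of positions of `t` whose subterm is not reachable
from a constant. -/
noncomputable def meas (R : Set (Rule F V)) (t : Tm F V) : ℕ :=
  Nat.card {p : List ℕ // ∃ u, t.subAt p = some u ∧ ¬ FromConst R u}

/-- `t` is a normal form w.r.t. `R/E`. -/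
def NFMod (R E : Set (Rule F V)) (t : Tm F V) : Prop := ¬ ∃ t', RewMod R E t t'

/-- `t` is `R`-irreducible. -/
def NF (R : Set (Rule F V)) (t : Tm F V) : Prop := ¬ ∃ t', Rew R t t'

/-- Innermost rewrite step with `R` (plain rewriting): all proper subterms of the
redex are irreducible. -/
def IRew (R : Set (Rule F V)) (s t : Tm F V) : Prop :=
  ∃ p, RewAt R p s t ∧
    ∀ (q : List ℕ) (w : Tm F V), q ≠ [] → s.subAt (p ++ q) = some w → NF R w

/-- Innermost rewrite step with `R` modulo `E`. -/
def IRewMod (R E : Set (Rule F V)) (s t : Tm F V) : Prop :=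
  ∃ u v, ∃ p : List ℕ, Reach E s u ∧ RewAt R p u v ∧ Reach E v t ∧
    ∀ (q : List ℕ) (w : Tm F V), q ≠ [] → u.subAt (p ++ q) = some w → NFMod R E w

/-- Innermost termination of `R/E`. -/
def ITerminating (R E : Set (Rule F V)) : Prop :=
  ¬ ∃ f : ℕ → Tm F V, ∀ n, IRewMod R E (f n) (f (n + 1))

end Rewriting

section Marking

variable {F V : Type}

/-- A derivation of length `n` with explicit rules, positions and substitutions. -/
def IsDeriv (R : Set (Rule F V)) (n : ℕ) (s : ℕ → Tm F V) (rl : ℕ → Rule F V)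
    (pp : ℕ → List ℕ) (sb : ℕ → V → Tm F V) : Prop :=
  ∀ i < n, rl i ∈ R ∧ RewWith (rl i).lhs (rl i).rhs (pp i) (sb i) (s i) (s (i + 1))

/-- `p'` is strictly below `p̄` : `p̄` is a proper prefix of `p'`. -/
def StrictBelow (pbar p : List ℕ) : Prop := ∃ q, q ≠ [] ∧ p = pbar ++ q

/-- A marking of a derivation. -/
def IsMarking (n : ℕ) (s : ℕ → Tm F V) (rl : ℕ → Rule F V)
    (pp : ℕ → List ℕ) (M : ℕ → List ℕ → Tm F V) : Prop :=
  (∀ p t, (s 0).subAt p = some t → M 0 p = t) ∧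
  ∀ i < n,
    (∀ p, (s (i + 1)).IsPos p → ¬ StrictBelow (pp i) p → M (i + 1) p = M i p) ∧
    (∀ (j : ℕ) (u : Tm F V), (rl i).rhs.subAt [j] = some u → u.IsConst →
        M (i + 1) (pp i ++ [j]) = u) ∧
    (∀ (j : ℕ) (p₁ : List ℕ) (x : V), (rl i).rhs.subAt [j] = some (Tm.var x) →
        (s (i + 1)).IsPos (pp i ++ j :: p₁) →
        ∃ q₀ : List ℕ, (rl i).lhs.subAt q₀ = some (Tm.var x) ∧
          M (i + 1) (pp i ++ j :: p₁) = M i (pp i ++ q₀ ++ p₁))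

end Marking

section WFSig

variable {F V : Type}

/-- Terms respecting the arity function. -/
inductive WFT (ar : F → ℕ) : Tm F V → Prop
  | var (x : V) : WFT ar (Tm.var x)
  | app (f : F) (ts : List (Tm F V)) : ts.length = ar f →
      (∀ t ∈ ts, WFT ar t) → WFT ar (Tm.app f ts)

end WFSig

/-- The arity-collapsing transformation `T`: symbols of `Σ` become constants
(`some g`), and a single symbol `none` of arity `m` is used for all applications,
padding argument lists with copies of the constant `g`. -/
def Tr {F V : Type} (m : ℕ) : Tm F V → Tm (Option F) V
  | Tm.var x => Tm.var x
  | Tm.app g ts =>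
    if ts.isEmpty then Tm.app (some g) []
    else Tm.app none ((ts.attach.map (fun t => Tr m t.1)) ++
      List.replicate (m - ts.length) (Tm.app (some g) []))
decreasing_by all_goals (simp_wf; have := List.sizeOf_lt_of_mem t.2; omega)

/-- `T` applied to a TRS, rule-wise. -/
def TrR {F V : Type} (m : ℕ) (R : Set (Rule F V)) : Set (Rule (Option F) V) :=
  {r' | ∃ r ∈ R, r' = ⟨Tr m r.lhs, Tr m r.rhs⟩}

/-!
`Tr m` commutes with substitution and with taking and replacing subterms at positions of `s`,
which gives the forward direction. Conversely, a redex `(Tr m l).subst σ'` in `Tr m s` cannot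
lie in the padding, so it is `Tr m u` for the subterm `u` of `s` at that position. Decoding
with `untr` gives `u = l.subst σ` and `σ' = Tr m ∘ σ` on the variables of `l`, hence on those
of `r`, so `Tr m t` is the image of the `R`-reduct `s[r.subst σ]`, and `untr` recovers `t` from it.
-/

theorem List.getElem?_map_append_of_getElem?_eq_some {α β : Type*} {l : List α} {i : ℕ}
    {a : α} (h : l[i]? = some a) (f : α → β) (l' : List β) :
    (l.map f ++ l')[i]? = some (f a) := by
  rw [List.getElem?_append_left (by simpa using (List.getElem?_eq_some_iff.mp h).1),
    List.getElem?_map, h, Option.map_some]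

namespace Tm

variable {F V : Type}

@[induction_eliminator]
theorem induct {motive : Tm F V → Prop} (var : ∀ x, motive (var x))
    (app : ∀ f ts, (∀ t ∈ ts, motive t) → motive (app f ts)) : ∀ t, motive t
  | .var x => var x
  | .app f ts => app f ts fun t _ => induct var app t
decreasing_by simp_wf; have := List.sizeOf_lt_of_mem ‹t ∈ ts›; omega

@[simp]
theorem subst_var (σ : V → Tm F V) (x : V) : (var x).subst σ = σ x := by
  rw [subst]

@[simp]
theorem subst_app (σ : V → Tm F V) (f : F) (ts : List (Tm F V)) :
    (app f ts).subst σ = app f (ts.map (subst σ)) := by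
  rw [subst]; simp

@[simp]
theorem varList_var (x : V) : (var x : Tm F V).varList = [x] := by
  rw [varList]

@[simp]
theorem varList_app (f : F) (ts : List (Tm F V)) :
    (app f ts).varList = (ts.map varList).flatten := by
  rw [varList]; simp

theorem subst_eq_subst_iff {σ τ : V → Tm F V} {t : Tm F V} :
    t.subst σ = t.subst τ ↔ ∀ x ∈ t.varList, σ x = τ x := by
  induction t with
  | var x => simp
  | app f ts ih =>
    simp only [subst_app, app.injEq, true_and, List.map_inj_left, varList_app,
      List.mem_flatten, List.mem_map]
    constructor
    · rintro h x ⟨_, ⟨t, ht, rfl⟩, hx⟩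
      exact (ih t ht).1 (h t ht) x hx
    · exact fun h t ht => (ih t ht).2 fun x hx => h x ⟨_, ⟨t, ht, rfl⟩, hx⟩

@[simp]
theorem subst_var_self (t : Tm F V) : t.subst var = t := by
  induction t with
  | var x => simp
  | app f ts ih => simpa using List.map_congr_left ih

@[simp]
theorem subAt_nil (t : Tm F V) : t.subAt [] = some t := by
  rw [subAt]

@[simp]
theorem subAt_var_cons (x : V) (i : ℕ) (p : List ℕ) : (var x : Tm F V).subAt (i :: p) = none := by
  rw [subAt]

theorem subAt_app_cons (f : F) (ts : List (Tm F V)) (i : ℕ) (p : List ℕ) :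
    (app f ts).subAt (i :: p) = ts[i]?.bind (subAt · p) := by
  rw [subAt]; cases ts[i]? <;> rfl

@[simp]
theorem replAt_nil (t v : Tm F V) : t.replAt [] v = some v := by
  rw [replAt]

@[simp]
theorem replAt_var_cons (x : V) (i : ℕ) (p : List ℕ) (v : Tm F V) :
    (var x : Tm F V).replAt (i :: p) v = none := by
  rw [replAt]

theorem replAt_app_cons (f : F) (ts : List (Tm F V)) (i : ℕ) (p : List ℕ) (v : Tm F V) :
    (app f ts).replAt (i :: p) v =
      ts[i]?.bind fun u => (u.replAt p v).map fun u' => app f (ts.set i u') := by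
  rw [replAt]; cases ts[i]? <;> rfl

theorem exists_replAt_of_subAt {s u : Tm F V} {p : List ℕ} (h : s.subAt p = some u)
    (v : Tm F V) : ∃ t, s.replAt p v = some t := by
  induction p generalizing s with
  | nil => simp
  | cons i p ih =>
    cases s with
    | var x => simp at h
    | app f ts =>
      rw [subAt_app_cons, Option.bind_eq_some_iff] at h
      obtain ⟨w, hw, hwu⟩ := h
      obtain ⟨t, ht⟩ := ih hwu
      exact ⟨app f (ts.set i t), by simp [replAt_app_cons, hw, ht]⟩

theorem exists_eq_app_of_ne_var {t : Tm F V} (ht : ∀ x, t ≠ .var x) :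
    ∃ f ts, t = .app f ts := by
  cases t with
  | var x => exact absurd rfl (ht x)
  | app f ts => exact ⟨f, ts, rfl⟩

end Tm

namespace WFT

variable {F V : Type} {ar : F → ℕ}

theorem subAt {s u : Tm F V} {p : List ℕ} (hs : WFT ar s) (h : s.subAt p = some u) :
    WFT ar u := by
  induction p generalizing s with
  | nil => simp_all
  | cons i p ih =>
    rcases hs with x | ⟨f, ts, -, hts⟩
    · simp at h
    · rw [Tm.subAt_app_cons, Option.bind_eq_some_iff] at h
      obtain ⟨w, hw, hwu⟩ := h
      exact ih (hts w (List.mem_of_getElem? hw)) hwu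

theorem replAt {s v t : Tm F V} {p : List ℕ} (hs : WFT ar s) (hv : WFT ar v)
    (h : s.replAt p v = some t) : WFT ar t := by
  induction p generalizing s t with
  | nil => simp_all
  | cons i p ih =>
    rcases hs with x | ⟨f, ts, hlen, hts⟩
    · simp at h
    · simp only [Tm.replAt_app_cons, Option.bind_eq_some_iff, Option.map_eq_some_iff] at h
      obtain ⟨w, hw, t', ht', rfl⟩ := h
      refine .app f _ (by simpa using hlen) fun u hu => ?_
      rcases List.mem_or_eq_of_mem_set hu with hu | rfl
      · exact hts u hu
      · exact ih (hts w (List.mem_of_getElem? hw)) ht'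

theorem subst {σ : V → Tm F V} {t : Tm F V} (ht : WFT ar t)
    (hσ : ∀ x ∈ t.varList, WFT ar (σ x)) : WFT ar (t.subst σ) := by
  induction ht with
  | var x => simpa using hσ
  | app f ts hlen _ ih =>
    rw [Tm.subst_app]
    refine .app f _ (by simpa using hlen) ?_
    simp only [List.mem_map, forall_exists_index, and_imp, forall_apply_eq_imp_iff₂]
    exact fun t ht => ih t ht fun x hx => hσ x (by simpa using ⟨t, ht, hx⟩)

theorem of_subst {σ : V → Tm F V} {t : Tm F V} (ht : WFT ar (t.subst σ)) :
    ∀ x ∈ t.varList, WFT ar (σ x) := by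
  induction t with
  | var x => simpa using ht
  | app f ts ih =>
    rw [Tm.subst_app] at ht
    rcases ht with _ | ⟨_, _, -, hts⟩
    simp only [Tm.varList_app, List.mem_flatten, List.mem_map]
    rintro x ⟨_, ⟨t, ht, rfl⟩, hx⟩
    exact ih t ht (hts _ (List.mem_map_of_mem ht)) x hx

end WFT

section Transformation

variable {F V : Type} (m : ℕ)

@[simp]
theorem Tr_var (x : V) : Tr m (Tm.var x : Tm F V) = Tm.var x := by
  rw [Tr]

@[simp]
theorem Tr_const (g : F) : Tr m (Tm.app g [] : Tm F V) = Tm.app (some g) [] := by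
  rw [Tr]; rfl

theorem Tr_app_of_ne_nil (g : F) {ts : List (Tm F V)} (hts : ts ≠ []) :
    Tr m (Tm.app g ts) =
      Tm.app none (ts.map (Tr m) ++ List.replicate (m - ts.length) (Tm.app (some g) [])) := by
  rw [Tr, if_neg (by simpa using hts)]; simp

theorem Tr_subst (σ : V → Tm F V) (t : Tm F V) :
    Tr m (t.subst σ) = (Tr m t).subst (Tr m ∘ σ) := by
  induction t with
  | var x => simp
  | app f ts ih =>
    rcases eq_or_ne ts [] with rfl | hts
    · simp
    · rw [Tm.subst_app, Tr_app_of_ne_nil m f hts, Tr_app_of_ne_nil m f (by simpa using hts)]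
      simpa using List.map_congr_left ih

theorem varList_Tr (t : Tm F V) : (Tr m t).varList = t.varList := by
  induction t with
  | var x => simp
  | app f ts ih =>
    rcases eq_or_ne ts [] with rfl | hts
    · simp
    · rw [Tr_app_of_ne_nil m f hts]
      simpa [Function.comp_def] using congrArg List.flatten (List.map_congr_left ih)

end Transformation

section Positions

variable {F V : Type} (m : ℕ)

theorem subAt_Tr {s u : Tm F V} {p : List ℕ} (h : s.subAt p = some u) :
    (Tr m s).subAt p = some (Tr m u) := by
  induction p generalizing s with
  | nil => simp_all
  | cons i p ih =>
    cases s with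
    | var x => simp at h
    | app f ts =>
      rw [Tm.subAt_app_cons, Option.bind_eq_some_iff] at h
      obtain ⟨w, hw, hwu⟩ := h
      rw [Tr_app_of_ne_nil m f (List.ne_nil_of_mem (List.mem_of_getElem? hw)), Tm.subAt_app_cons,
        List.getElem?_map_append_of_getElem?_eq_some hw, Option.bind_some, ih hwu]

theorem replAt_Tr {s v t : Tm F V} {p : List ℕ} (h : s.replAt p v = some t) :
    (Tr m s).replAt p (Tr m v) = some (Tr m t) := by
  induction p generalizing s t with
  | nil => simp_all
  | cons i p ih =>
    cases s with
    | var x => simp at h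
    | app f ts =>
      simp only [Tm.replAt_app_cons, Option.bind_eq_some_iff, Option.map_eq_some_iff] at h
      obtain ⟨w, hw, t', ht', rfl⟩ := h
      have hi : i < ts.length := (List.getElem?_eq_some_iff.mp hw).1
      have hts : ts ≠ [] := List.ne_nil_of_mem (List.mem_of_getElem? hw)
      rw [Tr_app_of_ne_nil m f hts, Tr_app_of_ne_nil m f (by simpa using hts), Tm.replAt_app_cons,
        List.getElem?_map_append_of_getElem?_eq_some hw, Option.bind_some, ih ht', Option.map_some,
        List.set_append_left _ _ (by simpa using hi), List.map_set, List.length_set]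

theorem subAt_Tr_cases {ar : F → ℕ} {s : Tm F V} {w : Tm (Option F) V} {p : List ℕ}
    (hs : WFT ar s) (h : (Tr m s).subAt p = some w) :
    (∃ u, s.subAt p = some u ∧ w = Tr m u) ∨ ∃ g, w = Tm.app (some g) [] ∧ 0 < ar g := by
  induction p generalizing s with
  | nil => simp_all
  | cons i p ih =>
    rcases hs with x | ⟨f, ts, hlen, hts⟩
    · simp at h
    rcases eq_or_ne ts [] with rfl | hne
    · simp [Tm.subAt_app_cons] at h
    rw [Tr_app_of_ne_nil m f hne, Tm.subAt_app_cons, Option.bind_eq_some_iff] at h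
    obtain ⟨e, he, hew⟩ := h
    by_cases hi : i < ts.length
    · obtain ⟨v, hv⟩ : ∃ v, ts[i]? = some v := ⟨_, List.getElem?_eq_getElem hi⟩
      rw [List.getElem?_map_append_of_getElem?_eq_some hv, Option.some_inj] at he
      subst he
      rcases ih (hts v (List.mem_of_getElem? hv)) hew with ⟨u, hu, rfl⟩ | hpad
      · exact .inl ⟨u, by simp [Tm.subAt_app_cons, hv, hu], rfl⟩
      · exact .inr hpad
    · rw [List.getElem?_append_right (by simpa using hi)] at he
      obtain rfl := (List.mem_replicate.mp (List.mem_of_getElem? he)).2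
      cases p with
      | nil => exact .inr ⟨f, by simpa using hew.symm, hlen ▸ List.length_pos_iff.mpr hne⟩
      | cons j p => simp [Tm.subAt_app_cons] at hew

end Positions

/-- The head symbol of an application is read off its last (padding) argument; ill-formed
input decodes to the constant `d`. -/
def untr {F V : Type} (d : F) (ar : F → ℕ) : Tm (Option F) V → Tm F V
  | Tm.var x => Tm.var x
  | Tm.app (some g) _ => Tm.app g []
  | Tm.app none l =>
    match l.getLast? with
    | some (Tm.app (some g) _) =>
        Tm.app g ((l.take (ar g)).attach.map (fun t => untr d ar t.1))
    | _ => Tm.app d []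
decreasing_by all_goals
  (simp_wf; have := List.sizeOf_lt_of_mem (List.mem_of_mem_take t.2); omega)

section Decoding

variable {F V : Type} (d : F) (ar : F → ℕ)

@[simp]
theorem untr_var (x : V) : untr d ar (Tm.var x : Tm (Option F) V) = Tm.var x := by
  rw [untr]

@[simp]
theorem untr_const (g : F) (ts : List (Tm (Option F) V)) :
    untr d ar (Tm.app (some g) ts) = Tm.app g [] := by
  rw [untr]

theorem untr_app_none_padded {k : ℕ} (hk : k ≠ 0) (g : F) (l : List (Tm (Option F) V)) :
    untr d ar (Tm.app none (l ++ List.replicate k (Tm.app (some g) []))) =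
      Tm.app g (((l ++ List.replicate k (Tm.app (some g) [])).take (ar g)).map (untr d ar)) := by
  obtain ⟨k, rfl⟩ := Nat.exists_eq_succ_of_ne_zero hk
  rw [untr, List.replicate_succ', ← List.append_assoc, List.getLast?_concat]
  simp

variable {d ar} {m : ℕ}

theorem untr_Tr_subst (hm : ∀ g, ar g < m) {l : Tm F V} (hl : WFT ar l)
    (σ : V → Tm (Option F) V) : untr d ar ((Tr m l).subst σ) = l.subst (untr d ar ∘ σ) := by
  induction hl with
  | var x => simp
  | app f ts hlen _ ih =>
    rcases eq_or_ne ts [] with rfl | hne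
    · simp
    have hpad : m - ts.length ≠ 0 := by have := hm f; omega
    rw [Tr_app_of_ne_nil m f hne, Tm.subst_app, List.map_append, List.map_replicate,
      Tm.subst_app, List.map_nil, untr_app_none_padded d ar hpad,
      List.take_left' (by simpa using hlen), Tm.subst_app, List.map_map, List.map_map]
    exact congrArg _ (List.map_congr_left ih)

theorem untr_Tr (hm : ∀ g, ar g < m) {t : Tm F V} (ht : WFT ar t) : untr d ar (Tr m t) = t := by
  simpa [Function.comp_def] using untr_Tr_subst (d := d) hm ht Tm.var

end Decoding

section Rewriting

variable {F V : Type} {ar : F → ℕ} {m : ℕ}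

theorem eq_subst_of_Tr_eq_Tr_subst (hm : ∀ g, ar g < m) (d : F) {l u : Tm F V}
    {σ' : V → Tm (Option F) V} (hl : WFT ar l) (hu : WFT ar u) (h : Tr m u = (Tr m l).subst σ') :
    u = l.subst (untr d ar ∘ σ') ∧
      ∀ x ∈ l.varList, σ' x = Tr m (untr d ar (σ' x)) ∧ WFT ar (untr d ar (σ' x)) := by
  have hu_eq : u = l.subst (untr d ar ∘ σ') := by
    rw [← untr_Tr hm hu, h, untr_Tr_subst hm hl]
  have hσ : (Tr m l).subst (Tr m ∘ untr d ar ∘ σ') = (Tr m l).subst σ' := by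
    rw [← Tr_subst, ← hu_eq, h]
  rw [Tm.subst_eq_subst_iff, varList_Tr] at hσ
  exact ⟨hu_eq, fun x hx => ⟨(hσ x hx).symm, (hu_eq ▸ hu).of_subst x hx⟩⟩

/-- A redex of a transformed rule in `Tr m s` never lies in the padding, since the padding
constants have positive arity and so are not left-hand sides of well-formed rules. -/
theorem exists_subAt_of_subAt_Tr_eq_Tr_subst {s l : Tm F V} {p : List ℕ}
    {σ' : V → Tm (Option F) V} (hs : WFT ar s) (hl : WFT ar l) (hl_var : ∀ x, l ≠ .var x)
    (h : (Tr m s).subAt p = some ((Tr m l).subst σ')) :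
    ∃ u, s.subAt p = some u ∧ Tr m u = (Tr m l).subst σ' := by
  rcases subAt_Tr_cases m hs h with ⟨u, hu, hTu⟩ | ⟨g, hg, hpos⟩
  · exact ⟨u, hu, hTu.symm⟩
  obtain ⟨c, ls, rfl⟩ := Tm.exists_eq_app_of_ne_var hl_var
  rcases hl with _ | ⟨_, _, hlen, -⟩
  rcases eq_or_ne ls [] with rfl | hne
  · obtain rfl : c = g := by simpa using hg
    simp_all
  · simp [Tr_app_of_ne_nil m c hne] at hg

theorem RewWith.map_Tr {l r s t : Tm F V} {p : List ℕ} {σ : V → Tm F V}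
    (h : RewWith l r p σ s t) : RewWith (Tr m l) (Tr m r) p (Tr m ∘ σ) (Tr m s) (Tr m t) :=
  ⟨Tr_subst m σ l ▸ subAt_Tr m h.1, Tr_subst m σ r ▸ replAt_Tr m h.2⟩

theorem RewWith.of_map_Tr (hm : ∀ g, ar g < m) {ρ : Rule F V}
    (hρ : WFT ar ρ.lhs ∧ WFT ar ρ.rhs ∧ ρ.WF) {s t : Tm F V} (hs : WFT ar s) (ht : WFT ar t)
    {p : List ℕ} {σ' : V → Tm (Option F) V}
    (h : RewWith (Tr m ρ.lhs) (Tr m ρ.rhs) p σ' (Tr m s) (Tr m t)) :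
    ∃ σ, RewWith ρ.lhs ρ.rhs p σ s t := by
  obtain ⟨hl, hr, hl_var, hvars⟩ := hρ
  -- any symbol will do as the junk value of `untr`
  obtain ⟨c, -, -⟩ := Tm.exists_eq_app_of_ne_var hl_var
  obtain ⟨u, hu, hTu⟩ := exists_subAt_of_subAt_Tr_eq_Tr_subst hs hl hl_var h.1
  obtain ⟨rfl, hσ⟩ := eq_subst_of_Tr_eq_Tr_subst hm c hl (hs.subAt hu) hTu
  set σ := untr c ar ∘ σ'
  have hσr : (Tr m ρ.rhs).subst σ' = Tr m (ρ.rhs.subst σ) := by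
    rw [Tr_subst, Tm.subst_eq_subst_iff, varList_Tr]
    exact fun x hx => (hσ x (hvars x hx)).1
  obtain ⟨t₀, ht₀⟩ := Tm.exists_replAt_of_subAt hu (ρ.rhs.subst σ)
  have hwt₀ : WFT ar t₀ := hs.replAt (hr.subst fun x hx => (hσ x (hvars x hx)).2) ht₀
  have hTt : Tr m t₀ = Tr m t := by
    simpa [← hσr, h.2] using (replAt_Tr m ht₀).symm
  refine ⟨σ, hu, ?_⟩
  rw [ht₀, ← untr_Tr (d := c) hm hwt₀, hTt, untr_Tr hm ht]

end Rewriting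

/-- For all well-formed terms `s, t` over `Σ`:
`s →_R t` iff `T(s) →_{T(R)} T(t)`. -/
theorem stmt14 {F V : Type} (ar : F → ℕ) (m : ℕ) (hm : ∀ g : F, ar g < m)
    (R : Set (Rule F V))
    (hwf : ∀ r ∈ R, WFT ar r.lhs ∧ WFT ar r.rhs ∧ r.WF)
    (s t : Tm F V) (hs : WFT ar s) (ht : WFT ar t) :
    Rew R s t ↔ Rew (TrR m R) (Tr m s) (Tr m t) := by
  constructor
  · rintro ⟨p, ρ, hρ, σ, h⟩
    exact ⟨p, _, ⟨ρ, hρ, rfl⟩, _, h.map_Tr⟩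
  · rintro ⟨p, _, ⟨ρ, hρ, rfl⟩, σ', h⟩
    obtain ⟨σ, hσ⟩ := RewWith.of_map_Tr hm (hwf ρ hρ) hs ht h
    exact ⟨p, ρ, hρ, σ, hσ⟩
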